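/- Let ξ(t,s) be a smooth solution of the normalized flow ∂_tξ = ∂_s(σ∂_sξ) + ξ with |∂_sξ| ≡ 1, and suppose ∫₀¹|∂_tξ(t,s)|² ds ≤ ε for some ε > 0 at time t. Then for all s₁, s₂ ∈ S¹, |(σ(t,s₁) + (1/2)|ξ(t,s₁)|²) − (σ(t,s₂) + (1/2)|ξ(t,s₂)|²)| ≤ √ε; in particular |σ(t,s) − σ̄(t)| ≤ √ε + sup_s |(1/2)|ξ(t,s)|² − (1/2)∫₀¹|ξ|² ds| where σ̄(t) = ∫₀¹σ(t,s)ds. -/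

import Mathlib

open Real MeasureTheory intervalIntegral

noncomputable section

theorem stmt19 (d : ℕ) (ε t : ℝ) (hε : 0 < ε)
    (ξ : ℝ → ℝ → EuclideanSpace ℝ (Fin d)) (σ : ℝ → ℝ → ℝ)
    (hξ : ContDiff ℝ (⊤ : ℕ∞) (fun p : ℝ × ℝ => ξ p.1 p.2))
    (hσ : ContDiff ℝ (⊤ : ℕ∞) (fun p : ℝ × ℝ => σ p.1 p.2))
    (hperξ : ∀ τ, Function.Periodic (ξ τ) 1)
    (hperσ : ∀ τ, Function.Periodic (σ τ) 1)
    (hspeed : ∀ τ s, ‖deriv (ξ τ) s‖ = 1)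
    (hmean : ∀ τ, (∫ s in (0:ℝ)..1, ξ τ s) = 0)
    (hflow : ∀ τ s, deriv (fun u => ξ u s) τ
        = deriv (fun r => σ τ r • deriv (ξ τ) r) s + ξ τ s)
    (hmult : ∀ τ s, deriv (deriv (σ τ)) s - σ τ s * ‖deriv (deriv (ξ τ)) s‖ ^ 2 = -1)
    (hdiss : (∫ s in (0:ℝ)..1, ‖deriv (fun u => ξ u s) t‖ ^ 2) ≤ ε) :
    (∀ s₁ s₂ : ℝ,
      |(σ t s₁ + (1/2) * ‖ξ t s₁‖ ^ 2) - (σ t s₂ + (1/2) * ‖ξ t s₂‖ ^ 2)|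
        ≤ Real.sqrt ε) ∧
    (∀ s : ℝ, |σ t s - ∫ r in (0:ℝ)..1, σ t r|
        ≤ Real.sqrt ε + ⨆ s' : Set.Icc (0:ℝ) 1,
            |(1/2) * ‖ξ t (s' : ℝ)‖ ^ 2 - (1/2) * ∫ r in (0:ℝ)..1, ‖ξ t r‖ ^ 2|) := by
  classical
  have hone : ((⊤ : ℕ∞) : WithTop ℕ∞) ≠ 0 := by
    simp
  -- slice regularity
  have hξt0 : ContDiff ℝ (⊤ : ℕ∞) (ξ t) := by
    have := hξ.comp (ContDiff.prodMk (contDiff_const (c := t)) contDiff_id)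
    simpa [Function.comp_def] using this
  have hσt0 : ContDiff ℝ (⊤ : ℕ∞) (σ t) := by
    have := hσ.comp (ContDiff.prodMk (contDiff_const (c := t)) contDiff_id)
    simpa [Function.comp_def] using this
  have hξt : ContDiff ℝ ((⊤ : ℕ∞) : WithTop ℕ∞) (ξ t) := hξt0.of_le (by simp)
  have hσt : ContDiff ℝ ((⊤ : ℕ∞) : WithTop ℕ∞) (σ t) := hσt0.of_le (by simp)
  have hξt' : ContDiff ℝ ((⊤ : ℕ∞) : WithTop ℕ∞) (deriv (ξ t)) :=
    (contDiff_infty_iff_deriv.mp hξt).2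
  have hξdiff : ∀ s, HasDerivAt (ξ t) (deriv (ξ t) s) s := fun s =>
    ((hξt.differentiable hone) s).hasDerivAt
  have hξ2 : ∀ s, HasDerivAt (deriv (ξ t)) (deriv (deriv (ξ t)) s) s := fun s =>
    ((hξt'.differentiable hone) s).hasDerivAt
  have hσdiff : ∀ s, HasDerivAt (σ t) (deriv (σ t) s) s := fun s =>
    ((hσt.differentiable hone) s).hasDerivAt
  -- time derivative Dt
  set Dt : ℝ → EuclideanSpace ℝ (Fin d) := fun s => deriv (fun u => ξ u s) t with hDt
  have hDt_eq : ∀ s, Dt s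
      = fderiv ℝ (fun p : ℝ × ℝ => ξ p.1 p.2) (t, s) (1, 0) := by
    intro s
    have h1 : HasDerivAt (fun u : ℝ => (u, s)) ((1 : ℝ), (0 : ℝ)) t :=
      HasDerivAt.prodMk (hasDerivAt_id t) (hasDerivAt_const t s)
    have h2 : HasFDerivAt (fun p : ℝ × ℝ => ξ p.1 p.2)
        (fderiv ℝ (fun p : ℝ × ℝ => ξ p.1 p.2) (t, s)) (t, s) :=
      ((hξ.differentiable (by simp)) (t, s)).hasFDerivAt
    exact (h2.comp_hasDerivAt t h1).deriv
  have hDt_cont : Continuous Dt := by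
    have h1 : Continuous fun s : ℝ => fderiv ℝ (fun p : ℝ × ℝ => ξ p.1 p.2) (t, s) :=
      (hξ.continuous_fderiv (by simp)).comp (continuous_const.prodMk continuous_id)
    have h2 : Continuous fun s : ℝ => fderiv ℝ (fun p : ℝ × ℝ => ξ p.1 p.2) (t, s) ((1:ℝ), (0:ℝ)) :=
      h1.clm_apply continuous_const
    exact h2.congr fun s => (hDt_eq s).symm
  -- orthogonality :  ⟪ξ'', ξ'⟫ = 0
  have horth : ∀ s, (inner ℝ (deriv (deriv (ξ t)) s) (deriv (ξ t) s) : ℝ) = 0 := by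
    intro s
    have h1 : HasDerivAt (fun r => (inner ℝ (deriv (ξ t) r) (deriv (ξ t) r) : ℝ))
        (inner ℝ (deriv (ξ t) s) (deriv (deriv (ξ t)) s)
          + inner ℝ (deriv (deriv (ξ t)) s) (deriv (ξ t) s)) s :=
      (hξ2 s).inner ℝ (hξ2 s)
    have h2 : (fun r => (inner ℝ (deriv (ξ t) r) (deriv (ξ t) r) : ℝ)) = fun _ => (1 : ℝ) := by
      funext r
      rw [real_inner_self_eq_norm_sq, hspeed t r]; norm_num
    rw [h2] at h1
    have h3 := (hasDerivAt_const s (1 : ℝ)).unique h1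
    have h4 : (inner ℝ (deriv (ξ t) s) (deriv (deriv (ξ t)) s) : ℝ)
        = inner ℝ (deriv (deriv (ξ t)) s) (deriv (ξ t) s) := real_inner_comm _ _
    rw [h4] at h3
    linarith
  -- the flow identity for Dt
  have hDt_flow : ∀ s, Dt s = deriv (σ t) s • deriv (ξ t) s
      + σ t s • deriv (deriv (ξ t)) s + ξ t s := by
    intro s
    have h1 : HasDerivAt (fun r => σ t r • deriv (ξ t) r)
        (σ t s • deriv (deriv (ξ t)) s + deriv (σ t) s • deriv (ξ t) s) s :=
      (hσdiff s).smul (hξ2 s)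
    have h5 := hflow t s
    rw [h1.deriv] at h5
    show deriv (fun u => ξ u s) t = _
    rw [h5]; abel
  -- F and its derivative g
  set F : ℝ → ℝ := fun s => σ t s + (1/2) * ‖ξ t s‖ ^ 2 with hFdef
  set g : ℝ → ℝ := fun s => (inner ℝ (Dt s) (deriv (ξ t) s) : ℝ) with hgdef
  have hg_eq : ∀ s, g s = deriv (σ t) s + (inner ℝ (ξ t s) (deriv (ξ t) s) : ℝ) := by
    intro s
    rw [hgdef]
    simp only [hDt_flow s, inner_add_left, inner_smul_left, RCLike.conj_to_real,
      horth s, real_inner_self_eq_norm_sq]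
    rw [hspeed t s]
    ring
  have hF : ∀ s, HasDerivAt F (g s) s := by
    intro s
    have h1 : HasDerivAt (fun r => (inner ℝ (ξ t r) (ξ t r) : ℝ))
        (inner ℝ (ξ t s) (deriv (ξ t) s) + inner ℝ (deriv (ξ t) s) (ξ t s)) s :=
      (hξdiff s).inner ℝ (hξdiff s)
    have h2 : (fun r => σ t r + (1/2) * (inner ℝ (ξ t r) (ξ t r) : ℝ)) = F := by
      funext r
      simp only [hFdef]
      rw [real_inner_self_eq_norm_sq]
    have h3 : HasDerivAt (fun r => σ t r + (1/2) * (inner ℝ (ξ t r) (ξ t r) : ℝ))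
        (deriv (σ t) s + (1/2) * ((inner ℝ (ξ t s) (deriv (ξ t) s) : ℝ)
          + inner ℝ (deriv (ξ t) s) (ξ t s))) s :=
      (hσdiff s).add (h1.const_mul (1/2 : ℝ))
    rw [h2] at h3
    have h4 : deriv (σ t) s + (1/2) * ((inner ℝ (ξ t s) (deriv (ξ t) s) : ℝ)
        + inner ℝ (deriv (ξ t) s) (ξ t s)) = g s := by
      rw [hg_eq s, real_inner_comm (deriv (ξ t) s) (ξ t s)]; ring
    rwa [h4] at h3
  have hg_cont : Continuous g :=
    hDt_cont.inner (hξt'.continuous)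
  have hF_cont : Continuous F :=
    (hσt.continuous).add (continuous_const.mul ((hξt.continuous.norm).pow 2))
  have hF_per : Function.Periodic F 1 := by
    intro s
    rw [hFdef]
    simp only
    rw [hperσ t s, hperξ t s]
  -- the dissipation bound on ∫ g²
  have hg2_le : (∫ s in (0:ℝ)..1, g s ^ 2) ≤ ε := by
    have h1 : (∫ s in (0:ℝ)..1, g s ^ 2) ≤ ∫ s in (0:ℝ)..1, ‖Dt s‖ ^ 2 := by
      apply intervalIntegral.integral_mono_on zero_le_one
        ((hg_cont.pow 2).intervalIntegrable 0 1)
        ((hDt_cont.norm.pow 2).intervalIntegrable 0 1)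
      intro x _
      have h6 := abs_real_inner_le_norm (Dt x) (deriv (ξ t) x)
      rw [hspeed t x, mul_one] at h6
      calc g x ^ 2 = |g x| ^ 2 := (sq_abs _).symm
        _ ≤ ‖Dt x‖ ^ 2 := pow_le_pow_left₀ (abs_nonneg _) h6 2
    exact h1.trans hdiss
  set δ := Real.sqrt ε with hδdef
  have hδpos : 0 < δ := Real.sqrt_pos.mpr hε
  have hδsq : δ ^ 2 = ε := Real.sq_sqrt hε.le
  -- oscillation bound on [0,1]
  have hosc01 : ∀ a b : ℝ, 0 ≤ a → a ≤ b → b ≤ 1 → |F b - F a| ≤ δ := by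
    intro a b ha hab hb
    have hftc : (∫ x in a..b, g x) = F b - F a :=
      intervalIntegral.integral_eq_sub_of_hasDerivAt (fun x _ => hF x)
        (hg_cont.intervalIntegrable a b)
    rw [← hftc]
    have h1 : |∫ x in a..b, g x| ≤ ∫ x in a..b, |g x| :=
      intervalIntegral.abs_integral_le_integral_abs hab
    have h2 : (∫ x in a..b, |g x|) ≤ ∫ x in (0:ℝ)..1, |g x| := by
      apply intervalIntegral.integral_mono_interval ha hab hb
      · exact Filter.Eventually.of_forall fun x => abs_nonneg _
      · exact (hg_cont.abs).intervalIntegrable 0 1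
    have h3 : (∫ x in (0:ℝ)..1, |g x|) ≤ ∫ x in (0:ℝ)..1, (δ/2 + g x ^ 2 / (2*δ)) := by
      apply intervalIntegral.integral_mono_on zero_le_one
        ((hg_cont.abs).intervalIntegrable 0 1)
        ((continuous_const.add ((hg_cont.pow 2).div_const _)).intervalIntegrable 0 1)
      intro x _
      show |g x| ≤ δ/2 + g x ^ 2 / (2*δ)
      rw [show δ/2 + g x ^ 2 / (2*δ) = (δ^2 + g x ^ 2)/(2*δ) by field_simp,
        le_div_iff₀ (by positivity : (0:ℝ) < 2*δ)]
      nlinarith [sq_nonneg (|g x| - δ), sq_abs (g x)]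
    have h4 : (∫ x in (0:ℝ)..1, (δ/2 + g x ^ 2 / (2*δ)))
        = δ/2 + (∫ x in (0:ℝ)..1, g x ^ 2) / (2*δ) := by
      rw [intervalIntegral.integral_add (f := fun _ => δ/2) (g := fun x => g x ^ 2 / (2*δ))
        (intervalIntegrable_const)
        (((hg_cont.pow 2).div_const _).intervalIntegrable 0 1)]
      simp [intervalIntegral.integral_div]
    rw [h4] at h3
    have h5 : (∫ x in (0:ℝ)..1, g x ^ 2) / (2*δ) ≤ δ/2 := by
      rw [div_le_iff₀ (by positivity : (0:ℝ) < 2*δ)]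
      nlinarith [hg2_le]
    linarith
  -- full oscillation bound
  have hosc : ∀ s₁ s₂ : ℝ, |F s₁ - F s₂| ≤ δ := by
    have hfract : ∀ s : ℝ, F (Int.fract s) = F s := by
      intro s
      have h7 := hF_per.sub_int_mul_eq (x := s) ⌊s⌋
      rw [mul_one] at h7
      rw [← Int.self_sub_floor s]
      exact h7
    intro s₁ s₂
    rw [← hfract s₁, ← hfract s₂]
    rcases le_total (Int.fract s₂) (Int.fract s₁) with h | h
    · exact hosc01 _ _ (Int.fract_nonneg s₂) h (Int.fract_lt_one s₁).le
    · rw [abs_sub_comm]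
      exact hosc01 _ _ (Int.fract_nonneg s₁) h (Int.fract_lt_one s₂).le
  constructor
  · intro s₁ s₂
    exact hosc s₁ s₂
  -- second part
  intro s
  set c2 : ℝ := (1/2) * ∫ r in (0:ℝ)..1, ‖ξ t r‖ ^ 2 with hc2
  set σbar : ℝ := ∫ r in (0:ℝ)..1, σ t r with hσbar
  have hint_σ : IntervalIntegrable (σ t) volume 0 1 := (hσt.continuous).intervalIntegrable 0 1
  have hint_n : IntervalIntegrable (fun r => (1/2) * ‖ξ t r‖ ^ 2) volume 0 1 :=
    (continuous_const.mul ((hξt.continuous.norm).pow 2)).intervalIntegrable 0 1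
  have hFint : (∫ r in (0:ℝ)..1, F r) = σbar + c2 := by
    simp only [hFdef]
    rw [intervalIntegral.integral_add hint_σ hint_n]
    rw [hσbar, hc2, intervalIntegral.integral_const_mul]
  have hFs : |F s - ∫ r in (0:ℝ)..1, F r| ≤ δ := by
    have h1 : F s - ∫ r in (0:ℝ)..1, F r = ∫ r in (0:ℝ)..1, (F s - F r) := by
      rw [intervalIntegral.integral_sub (intervalIntegrable_const)
        (hF_cont.intervalIntegrable 0 1)]
      rw [intervalIntegral.integral_const]
      norm_num
    rw [h1]
    calc |∫ r in (0:ℝ)..1, (F s - F r)| ≤ ∫ r in (0:ℝ)..1, |F s - F r| :=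
          intervalIntegral.abs_integral_le_integral_abs zero_le_one
      _ ≤ ∫ r in (0:ℝ)..1, δ := by
          apply intervalIntegral.integral_mono_on zero_le_one
            (((continuous_const.sub hF_cont).abs).intervalIntegrable 0 1)
            intervalIntegrable_const
          intro x _
          exact hosc s x
      _ = δ := by simp
  -- the sup bound
  set h : ℝ → ℝ := fun s' => |(1/2) * ‖ξ t s'‖ ^ 2 - (1/2) * ∫ r in (0:ℝ)..1, ‖ξ t r‖ ^ 2|
    with hhdef
  have hh_cont : Continuous h :=
    ((continuous_const.mul ((hξt.continuous.norm).pow 2)).sub continuous_const).abs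
  have hbdd : BddAbove (Set.range fun s' : Set.Icc (0:ℝ) 1 => h (s' : ℝ)) := by
    have h8 : (Set.range fun s' : Set.Icc (0:ℝ) 1 => h (s' : ℝ)) = h '' Set.Icc 0 1 := by
      rw [← Set.image_eq_range]
    rw [h8]
    exact (isCompact_Icc.image hh_cont).bddAbove
  have hh_per : ∀ s' : ℝ, h (Int.fract s') = h s' := by
    intro s'
    have hx : ξ t (Int.fract s') = ξ t s' := by
      have h7 := (hperξ t).sub_int_mul_eq (x := s') ⌊s'⌋
      rw [mul_one] at h7
      rw [← Int.self_sub_floor s']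
      exact h7
    rw [hhdef]
    simp only [hx]
  have hsup : h s ≤ ⨆ s' : Set.Icc (0:ℝ) 1, h (s' : ℝ) := by
    rw [← hh_per s]
    exact le_ciSup hbdd ⟨Int.fract s, ⟨Int.fract_nonneg s, (Int.fract_lt_one s).le⟩⟩
  -- combine
  have hdecomp : σ t s - σbar = (F s - ∫ r in (0:ℝ)..1, F r)
      - ((1/2) * ‖ξ t s‖ ^ 2 - (1/2) * ∫ r in (0:ℝ)..1, ‖ξ t r‖ ^ 2) := by
    rw [hFint]
    simp only [hFdef, hc2]
    ring
  calc |σ t s - σbar| ≤ |F s - ∫ r in (0:ℝ)..1, F r| + h s := by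
        rw [hdecomp]
        exact abs_sub _ _
    _ ≤ δ + ⨆ s' : Set.Icc (0:ℝ) 1, h (s' : ℝ) := add_le_add hFs hsup
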